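/- Let Ω be a measurable space, let I be a countable set, and let B¹, …, B^k be independent Ω^I-valued random variables, each of which is tail-trivial. Then the (Ω^k)^I-valued random variable ((B_i^1, …, B_i^k))_{i∈I} is tail-trivial. -/

import Mathlib

open MeasureTheory Filter

/-- The sub-σ-algebra of the product σ-algebra on `I → Ω` consisting of events depending
only on the coordinates in `J`. -/
def cylAlg (Ω : Type*) [m : MeasurableSpace Ω] {I : Type*} (J : Set I) :
    MeasurableSpace (I → Ω) :=
  ⨆ i ∈ J, MeasurableSpace.comap (fun f => f i) m

/-- The tail σ-algebra of `I → Ω`: the intersection of the σ-algebras `cylAlg Ω J`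
over all `J ⊆ I` with finite complement. -/
def tailAlg (Ω : Type*) [MeasurableSpace Ω] (I : Type*) : MeasurableSpace (I → Ω) :=
  ⨅ (J : Set I) (_ : Jᶜ.Finite), cylAlg Ω J

/-!
By independence the joint law of `(B¹, …, Bᵏ)` is the product of the individual laws, so by
induction on `k` it suffices to pair two tail-trivial laws `μ` and `ν` coordinatewise. For a tail
event `S` of the pair, Fubini gives `(μ ⊗ ν)(S) = ∫ ν(Sₓ) dμ(x)`. Each section `Sₓ` is a tail event,
so `ν(Sₓ) ∈ {0, 1}`, and `{x | ν(Sₓ) = 1}` is itself a tail event, so its `μ`-measure is `0` or `1`.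
-/

open scoped ENNReal

section TailTriviality

variable {I Ω Ω₁ Ω₂ α β γ : Type*} [MeasurableSpace Ω] [MeasurableSpace Ω₁] [MeasurableSpace Ω₂]
  [MeasurableSpace β] [MeasurableSpace α]

lemma measurable_eval_cylAlg {J : Set I} {i : I} (hi : i ∈ J) :
    Measurable[cylAlg Ω J] (fun f : I → Ω => f i) :=
  measurable_iff_comap_le.2 <|
    le_iSup₂ (f := fun i (_ : i ∈ J) => MeasurableSpace.comap (fun f : I → Ω => f i) ‹_›) i hi

lemma measurable_cylAlg_iff {mγ : MeasurableSpace γ} {g : γ → I → Ω} {J : Set I} :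
    Measurable[mγ, cylAlg Ω J] g ↔ ∀ i ∈ J, Measurable fun c => g c i := by
  refine ⟨fun h i hi => (measurable_eval_cylAlg hi).comp h, fun h => ?_⟩
  rw [measurable_iff_comap_le, cylAlg]
  simp only [MeasurableSpace.comap_iSup, MeasurableSpace.comap_comp]
  exact iSup₂_le fun i hi => measurable_iff_comap_le.mp (h i hi)

lemma cylAlg_le_pi (J : Set I) : cylAlg Ω J ≤ MeasurableSpace.pi :=
  iSup₂_le fun i _ => measurable_iff_comap_le.mp (measurable_pi_apply i)

lemma tailAlg_le_pi : tailAlg Ω I ≤ MeasurableSpace.pi :=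
  (iInf₂_le Set.univ (by simp)).trans (cylAlg_le_pi Set.univ)

lemma measurableSet_tailAlg_iff {S : Set (I → Ω)} :
    MeasurableSet[tailAlg Ω I] S ↔ ∀ J : Set I, Jᶜ.Finite → MeasurableSet[cylAlg Ω J] S := by
  rw [tailAlg]
  simp only [MeasurableSpace.measurableSet_iInf]

lemma measurable_tailAlg_iff {mγ : MeasurableSpace γ} {g : (I → Ω) → γ} :
    Measurable[tailAlg Ω I, mγ] g ↔ ∀ J : Set I, Jᶜ.Finite → Measurable[cylAlg Ω J, mγ] g :=
  ⟨fun h J hJ => h.mono (iInf₂_le J hJ) le_rfl, fun h => measurable_iff_comap_le.2 <|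
    le_iInf₂ fun J hJ => measurable_iff_comap_le.1 (h J hJ)⟩

lemma measurable_piMap {φ : I → β → Ω} (hφ : ∀ i, Measurable (φ i)) : Measurable (Pi.map φ) :=
  measurable_pi_lambda (Pi.map φ) fun i => (hφ i).comp (measurable_pi_apply i)

lemma measurable_cylAlg_piMap {φ : I → β → Ω} (hφ : ∀ i, Measurable (φ i)) (J : Set I) :
    Measurable[cylAlg β J, cylAlg Ω J] (Pi.map φ) :=
  measurable_cylAlg_iff.2 fun i hi => (hφ i).comp (measurable_eval_cylAlg hi)

lemma measurable_tailAlg_piMap {φ : I → β → Ω} (hφ : ∀ i, Measurable (φ i)) :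
    Measurable[tailAlg β I, tailAlg Ω I] (Pi.map φ) := fun _ hS =>
  measurableSet_tailAlg_iff.2 fun J hJ =>
    measurable_cylAlg_piMap hφ J (measurableSet_tailAlg_iff.1 hS J hJ)

def IsTailTrivial (μ : Measure (I → Ω)) : Prop :=
  ∀ S : Set (I → Ω), MeasurableSet[tailAlg Ω I] S → μ S = 0 ∨ μ S = 1

lemma isTailTrivial_map_iff {P : Measure α} {X : α → I → Ω} (hX : Measurable X) :
    IsTailTrivial (P.map X) ↔
      ∀ S : Set (I → Ω), MeasurableSet[tailAlg Ω I] S → P (X ⁻¹' S) = 0 ∨ P (X ⁻¹' S) = 1 := by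
  refine forall₂_congr fun S hS => ?_
  rw [Measure.map_apply hX (tailAlg_le_pi S hS)]

lemma isTailTrivial_of_subsingleton [Subsingleton (I → Ω)] (μ : Measure (I → Ω))
    [IsProbabilityMeasure μ] : IsTailTrivial μ := by
  intro S _
  rcases S.eq_empty_or_nonempty with rfl | hS
  · exact Or.inl measure_empty
  · exact Or.inr (by rw [Subsingleton.eq_univ_of_nonempty hS, measure_univ])

lemma IsTailTrivial.map_piMap {μ : Measure (I → β)} (hμ : IsTailTrivial μ) {φ : I → β → Ω}
    (hφ : ∀ i, Measurable (φ i)) : IsTailTrivial (μ.map (Pi.map φ)) := fun S hS => by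
  rw [Measure.map_apply (measurable_piMap hφ) (tailAlg_le_pi S hS)]
  exact hμ _ (measurable_tailAlg_piMap hφ hS)

lemma measurable_transpose {ι : Type*} :
    Measurable fun (f : ι → I → Ω) i j => f j i :=
  measurable_pi_lambda _ fun i => measurable_pi_lambda _ fun j =>
    (measurable_pi_apply i).comp (measurable_pi_apply j)

lemma measurable_zip : Measurable fun (p : (I → Ω₁) × (I → Ω₂)) i => (p.1 i, p.2 i) :=
  measurable_pi_lambda _ fun i =>
    ((measurable_pi_apply i).comp measurable_fst).prodMk
      ((measurable_pi_apply i).comp measurable_snd)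

lemma lintegral_eq_measure_of_forall_eq_zero_or_one {μ : Measure β} {f : β → ℝ≥0∞}
    (hf : Measurable f) (h01 : ∀ x, f x = 0 ∨ f x = 1) : ∫⁻ x, f x ∂μ = μ (f ⁻¹' {1}) := by
  have hf_eq : f = (f ⁻¹' {1}).indicator 1 := by
    funext x
    rcases h01 x with hx | hx <;> simp [hx]
  rw [lintegral_congr (congrFun hf_eq), lintegral_indicator_one (hf (measurableSet_singleton 1))]

lemma measurable_tailAlg_measure_section {S : Set (I → Ω₁ × Ω₂)}
    (hS : MeasurableSet[tailAlg (Ω₁ × Ω₂) I] S) (ν : Measure (I → Ω₂)) [SFinite ν] :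
    Measurable[tailAlg Ω₁ I] fun x => ν {y | (fun i => (x i, y i)) ∈ S} := by
  refine measurable_tailAlg_iff.2 fun J hJ => ?_
  have hzip : Measurable[(cylAlg Ω₁ J).prod MeasurableSpace.pi, cylAlg (Ω₁ × Ω₂) J]
      fun p : (I → Ω₁) × (I → Ω₂) => fun i => (p.1 i, p.2 i) :=
    measurable_cylAlg_iff.2 fun i hi =>
      ((measurable_eval_cylAlg hi).comp measurable_fst).prodMk
        ((measurable_pi_apply i).comp measurable_snd)
  exact @measurable_measure_prodMk_left _ _ (cylAlg Ω₁ J) _ ν _ _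
    (hzip (measurableSet_tailAlg_iff.1 hS J hJ))

theorem IsTailTrivial.map_zip {μ : Measure (I → Ω₁)} {ν : Measure (I → Ω₂)}
    [IsProbabilityMeasure ν] (hμ : IsTailTrivial μ) (hν : IsTailTrivial ν) :
    IsTailTrivial ((μ.prod ν).map fun p i => (p.1 i, p.2 i)) := by
  intro S hS
  set g : (I → Ω₁) → ℝ≥0∞ := fun x => ν {y | (fun i => (x i, y i)) ∈ S}
  have hg : Measurable[tailAlg Ω₁ I] g := measurable_tailAlg_measure_section hS ν
  -- the section at `x` is the preimage of `S` under `Pi.map fun i => Prod.mk (x i)`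
  have hg01 : ∀ x, g x = 0 ∨ g x = 1 := fun x =>
    hν _ (measurable_tailAlg_piMap (fun i => measurable_prodMk_left (x := x i)) hS)
  have hS' : MeasurableSet (_ ⁻¹' S) := measurable_zip (tailAlg_le_pi S hS)
  rw [Measure.map_apply measurable_zip (tailAlg_le_pi S hS), Measure.prod_apply hS']
  change ∫⁻ x, g x ∂μ = 0 ∨ ∫⁻ x, g x ∂μ = 1
  rw [lintegral_eq_measure_of_forall_eq_zero_or_one (hg.mono tailAlg_le_pi le_rfl) hg01]
  exact hμ _ (hg (measurableSet_singleton 1))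

theorem IsTailTrivial.map_transpose_pi {k : ℕ} (μ : Fin k → Measure (I → Ω))
    [∀ j, IsProbabilityMeasure (μ j)] (hμ : ∀ j, IsTailTrivial (μ j)) :
    IsTailTrivial ((Measure.pi μ).map fun f i j => f j i) := by
  induction k with
  | zero =>
    have := Measure.isProbabilityMeasure_map (μ := Measure.pi μ) measurable_transpose.aemeasurable
    exact isTailTrivial_of_subsingleton _
  | succ k ih =>
    set μ' : Fin k → Measure (I → Ω) := fun j => μ (Fin.succAbove 0 j)
    set e := MeasurableEquiv.piFinSuccAbove (fun _ => I → Ω) 0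
    set cons := (MeasurableEquiv.piFinSuccAbove (fun _ => Ω) 0).symm
    have hsplit : (fun (f : Fin (k + 1) → I → Ω) i j => f j i) =
        Pi.map (fun _ => cons) ∘ (fun (p : (I → Ω) × (I → Fin k → Ω)) i => (p.1 i, p.2 i)) ∘
          Prod.map id (fun f i j => f j i) ∘ e := by
      funext f i j
      refine Fin.cases ?_ (fun j => ?_) j <;> simp [cons, e, Pi.map, Fin.tail]
    have hg : Measurable (Prod.map id (fun f i j => f j i) ∘ e) :=
      (measurable_id.prodMap measurable_transpose).comp e.measurable
    have hprod : (Measure.pi μ).map (Prod.map id (fun f i j => f j i) ∘ e) =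
        (μ 0).prod ((Measure.pi μ').map fun f i j => f j i) := by
      rw [← Measure.map_map (measurable_id.prodMap measurable_transpose) e.measurable,
        (measurePreserving_piFinSuccAbove μ 0).map_eq,
        ← Measure.map_prod_map _ _ measurable_id measurable_transpose, Measure.map_id]
    have := Measure.isProbabilityMeasure_map (μ := Measure.pi μ') measurable_transpose.aemeasurable
    rw [hsplit, ← Measure.map_map (measurable_piMap fun _ => cons.measurable)
      (measurable_zip.comp hg), ← Measure.map_map measurable_zip hg, hprod]
    exact ((hμ 0).map_zip (ih μ' fun j => hμ _)).map_piMap fun _ => cons.measurable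

end TailTriviality

theorem stmt4_general {Ω : Type*} [MeasurableSpace Ω] {I : Type*}
    {α : Type*} [MeasurableSpace α] (P : Measure α) [IsProbabilityMeasure P]
    (k : ℕ) (B : Fin k → α → I → Ω) (hmeas : ∀ j, Measurable (B j))
    (hindep : ProbabilityTheory.iIndepFun B P)
    (htriv : ∀ j, ∀ S : Set (I → Ω), MeasurableSet[tailAlg Ω I] S →
      P (B j ⁻¹' S) = 0 ∨ P (B j ⁻¹' S) = 1) :
    ∀ S : Set (I → (Fin k → Ω)), MeasurableSet[tailAlg (Fin k → Ω) I] S →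
      P ((fun a i j => B j a i) ⁻¹' S) = 0 ∨ P ((fun a i j => B j a i) ⁻¹' S) = 1 := by
  have hB : Measurable fun a j => B j a := measurable_pi_lambda _ hmeas
  have hX : (fun a i j => B j a i) = (fun f i j => f j i) ∘ fun a j => B j a := rfl
  refine (isTailTrivial_map_iff (hX ▸ measurable_transpose.comp hB)).1 ?_
  rw [hX, ← Measure.map_map measurable_transpose hB,
    hindep.map_fun_eq_pi_map fun j => (hmeas j).aemeasurable]
  have := fun j => Measure.isProbabilityMeasure_map (μ := P) (hmeas j).aemeasurable
  exact IsTailTrivial.map_transpose_pi _ fun j => (isTailTrivial_map_iff (hmeas j)).2 (htriv j)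

theorem stmt4 {Ω : Type*} [MeasurableSpace Ω] {I : Type*} [Countable I]
    {α : Type*} [MeasurableSpace α] (P : Measure α) [IsProbabilityMeasure P]
    (k : ℕ) (B : Fin k → α → I → Ω) (hmeas : ∀ j, Measurable (B j))
    (hindep : ProbabilityTheory.iIndepFun B P)
    (htriv : ∀ j, ∀ S : Set (I → Ω), MeasurableSet[tailAlg Ω I] S →
      P (B j ⁻¹' S) = 0 ∨ P (B j ⁻¹' S) = 1) :
    ∀ S : Set (I → (Fin k → Ω)), MeasurableSet[tailAlg (Fin k → Ω) I] S →
      P ((fun a i j => B j a i) ⁻¹' S) = 0 ∨ P ((fun a i j => B j a i) ⁻¹' S) = 1 :=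
  stmt4_general P k B hmeas hindep htriv
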